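/- For any A > 0 and k ≥ 1, the marginal increase in lost traffic from adding extra load is bounded by the new blocking probability: for B > 0, (A+B)·E_k(A+B) − A·E_k(A) ≤ B, hence the class-i blocking probability P_b(i) = ((Â_i)E_k(Â_i) − (Â_{i−1})E_k(Â_{i−1}))/A_i is at most 1. -/

import Mathlib

/-!
Write `S(t) = ∑_{m ≤ k} t^m/m!` and `μ(t) = (∑_{m ≤ k} m t^m/m!) / S(t)`, the mean of the Poisson
distribution of parameter `t` truncated to `{0, …, k}`. Since `t · t^m/m! = (m+1) t^(m+1)/(m+1)!`,
one has `t S(t) = S(t) μ(t) + t^(k+1)/k!`, i.e. `t E_k(t) = t - μ(t)`. The truncated Poisson family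
has a monotone likelihood ratio in `t`, so `μ` is nondecreasing, and therefore
`(A+B) E_k(A+B) - A E_k(A) = B - (μ(A+B) - μ(A)) ≤ B`.
-/

open Finset
open scoped Nat

noncomputable def ErlangB (k : ℕ) (A : ℝ) : ℝ :=
  (A ^ k / (Nat.factorial k : ℝ)) / (∑ m ∈ Finset.range (k + 1), A ^ m / (Nat.factorial m : ℝ))

lemma pow_mul_pow_le_pow_mul_pow {x y : ℝ} (hx : 0 ≤ x) (hxy : x ≤ y) {m n : ℕ} (h : n ≤ m) :
    x ^ m * y ^ n ≤ y ^ m * x ^ n := by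
  obtain ⟨d, rfl⟩ := Nat.exists_eq_add_of_le h
  have hy : 0 ≤ y := hx.trans hxy
  calc x ^ (n + d) * y ^ n = (x * y) ^ n * x ^ d := by ring
    _ ≤ (x * y) ^ n * y ^ d := by gcongr
    _ = y ^ (n + d) * x ^ n := by ring

/-- Chebyshev-type inequality: if `g / f` is nondecreasing, the `c`-mean under `g` dominates the
`c`-mean under `f` for every nondecreasing `c`. -/
lemma Finset.sum_mul_sum_le_sum_mul_sum_of_monotone {ι : Type*} [LinearOrder ι] (s : Finset ι)
    {c f g : ι → ℝ} (hc : Monotone c) (hfg : ∀ m n, n ≤ m → f m * g n ≤ g m * f n) :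
    (∑ i ∈ s, c i * f i) * ∑ j ∈ s, g j ≤ (∑ i ∈ s, c i * g i) * ∑ j ∈ s, f j := by
  set T : ι → ι → ℝ := fun m n => c m * (g m * f n - f m * g n)
  have hpair : ∀ m n, 0 ≤ T m n + T n m := fun m n => by
    have hT : T m n + T n m = (c m - c n) * (g m * f n - f m * g n) := by simp only [T]; ring
    rcases le_total n m with h | h
    · rw [hT]; exact mul_nonneg (sub_nonneg.2 (hc h)) (by linarith [hfg m n h])
    · rw [hT, ← neg_mul_neg]
      exact mul_nonneg (by linarith [hc h]) (by linarith [hfg n m h])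
  have hdiff : (∑ i ∈ s, c i * g i) * ∑ j ∈ s, f j - (∑ i ∈ s, c i * f i) * ∑ j ∈ s, g j
      = ∑ m ∈ s, ∑ n ∈ s, T m n := by
    simp only [T, sum_mul_sum, ← sum_sub_distrib]
    exact sum_congr rfl fun m _ => sum_congr rfl fun n _ => by ring
  have hsymm : 0 ≤ 2 * ∑ m ∈ s, ∑ n ∈ s, T m n := by
    calc (0 : ℝ) ≤ ∑ m ∈ s, ∑ n ∈ s, (T m n + T n m) :=
          sum_nonneg fun m _ => sum_nonneg fun n _ => hpair m n
      _ = 2 * ∑ m ∈ s, ∑ n ∈ s, T m n := by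
          rw [sum_congr rfl fun m _ => sum_add_distrib, sum_add_distrib, sum_comm (f := fun n m => T m n)]
          ring
  linarith

lemma sum_range_pow_div_factorial_pos (k : ℕ) {t : ℝ} (ht : 0 ≤ t) :
    0 < ∑ m ∈ range (k + 1), t ^ m / m ! :=
  sum_pos' (fun m _ => by positivity) ⟨0, mem_range.2 k.succ_pos, by simp⟩

lemma mul_sum_range_pow_div_factorial (k : ℕ) (t : ℝ) :
    t * ∑ m ∈ range (k + 1), t ^ m / m !
      = ∑ m ∈ range (k + 1), m * (t ^ m / m !) + t ^ (k + 1) / k ! := by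
  have hshift : ∀ m : ℕ, t * (t ^ m / m !) = ((m + 1 : ℕ) : ℝ) * (t ^ (m + 1) / (m + 1)!) := by
    intro m
    rw [Nat.factorial_succ]
    push_cast
    field_simp
    ring
  have hreindex : ∑ m ∈ range (k + 1), ((m + 1 : ℕ) : ℝ) * (t ^ (m + 1) / (m + 1)!)
      = ∑ m ∈ range (k + 2), m * (t ^ m / m !) := by
    rw [sum_range_succ' _ (k + 1)]
    simp
  rw [mul_sum, sum_congr rfl fun m _ => hshift m, hreindex, sum_range_succ, Nat.factorial_succ]
  push_cast
  field_simp

noncomputable def truncatedPoissonMean (k : ℕ) (t : ℝ) : ℝ :=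
  (∑ m ∈ range (k + 1), m * (t ^ m / m !)) / ∑ m ∈ range (k + 1), t ^ m / m !

lemma mul_erlangB_eq (k : ℕ) {t : ℝ} (ht : 0 ≤ t) :
    t * ErlangB k t = t - truncatedPoissonMean k t := by
  have hS := sum_range_pow_div_factorial_pos k ht
  have hid := mul_sum_range_pow_div_factorial k t
  rw [ErlangB, truncatedPoissonMean, eq_sub_iff_add_eq, mul_div_assoc', ← add_div,
    div_eq_iff hS.ne']
  have hlast : t * (t ^ k / k !) = t ^ (k + 1) / k ! := by ring
  linarith

lemma truncatedPoissonMean_mono (k : ℕ) {x y : ℝ} (hx : 0 ≤ x) (hxy : x ≤ y) :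
    truncatedPoissonMean k x ≤ truncatedPoissonMean k y := by
  rw [truncatedPoissonMean, truncatedPoissonMean,
    div_le_div_iff₀ (sum_range_pow_div_factorial_pos k hx)
      (sum_range_pow_div_factorial_pos k (hx.trans hxy))]
  refine sum_mul_sum_le_sum_mul_sum_of_monotone _ (fun _ _ h => by exact_mod_cast h)
    fun m n h => ?_
  rw [div_mul_div_comm, div_mul_div_comm, mul_comm (m ! : ℝ)]
  gcongr ?_ / _
  exact pow_mul_pow_le_pow_mul_pow hx hxy h

lemma mul_erlangB_add_sub_mul_erlangB_le (k : ℕ) {A B : ℝ} (hA : 0 ≤ A) (hB : 0 ≤ B) :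
    (A + B) * ErlangB k (A + B) - A * ErlangB k A ≤ B := by
  rw [mul_erlangB_eq k (add_nonneg hA hB), mul_erlangB_eq k hA]
  linarith [truncatedPoissonMean_mono k hA (le_add_of_nonneg_right hB)]

theorem lostTraffic_increment_le_general (k : ℕ) :
    (∀ A B : ℝ, 0 < A → 0 < B →
      (A + B) * ErlangB k (A + B) - A * ErlangB k A ≤ B) ∧
    ∀ (p : ℕ) (A : ℕ → ℝ), (∀ j, 1 ≤ j → j ≤ p → 0 < A j) →
      ∀ i, 1 ≤ i → i ≤ p →
        ((∑ j ∈ Finset.Icc 1 i, A j) * ErlangB k (∑ j ∈ Finset.Icc 1 i, A j) -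
          (∑ j ∈ Finset.Icc 1 (i - 1), A j) * ErlangB k (∑ j ∈ Finset.Icc 1 (i - 1), A j)) / A i ≤ 1 := by
  refine ⟨fun A B hA hB => mul_erlangB_add_sub_mul_erlangB_le k hA.le hB.le, ?_⟩
  intro p A hA i hi hip
  have hprev : 0 ≤ ∑ j ∈ Icc 1 (i - 1), A j :=
    sum_nonneg fun j hj => (hA j (mem_Icc.1 hj).1 (by have := (mem_Icc.1 hj).2; omega)).le
  have hsplit : ∑ j ∈ Icc 1 i, A j = ∑ j ∈ Icc 1 (i - 1), A j + A i := by
    obtain ⟨i, rfl⟩ := Nat.exists_eq_add_of_le' hi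
    rw [sum_Icc_succ_top (by omega), Nat.add_sub_cancel]
  rw [div_le_one (hA i hi hip), hsplit]
  exact mul_erlangB_add_sub_mul_erlangB_le k hprev (hA i hi hip).le

theorem lostTraffic_increment_le (k : ℕ) (hk : 1 ≤ k) :
    (∀ A B : ℝ, 0 < A → 0 < B →
      (A + B) * ErlangB k (A + B) - A * ErlangB k A ≤ B) ∧
    ∀ (p : ℕ) (A : ℕ → ℝ), (∀ j, 1 ≤ j → j ≤ p → 0 < A j) →
      ∀ i, 1 ≤ i → i ≤ p →
        ((∑ j ∈ Finset.Icc 1 i, A j) * ErlangB k (∑ j ∈ Finset.Icc 1 i, A j) -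
          (∑ j ∈ Finset.Icc 1 (i - 1), A j) * ErlangB k (∑ j ∈ Finset.Icc 1 (i - 1), A j)) / A i ≤ 1 :=
  lostTraffic_increment_le_general k
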